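/- Let T : M_{d₁}(ℂ) → M_{d₂}(ℂ) be a quantum channel and let σ, ρ be positive definite states on M_{d₁}(ℂ) such that σ_T := T(σ) and ρ_T := T(ρ) are positive definite. Define the linear map U : M_{d₂}(ℂ) → M_{d₁}(ℂ) by U(X) := σ^{1/2} T*(σ_T^{−1/2} X). Then: (i) the adjoint of U with respect to the Hilbert–Schmidt inner products is U*(Y) = σ_T^{−1/2} T(σ^{1/2} Y) for all Y ∈ M_{d₁}(ℂ); (ii) ⟨U(X), Γ · U(X)⟩ ≤ ⟨X, Γ_T · X⟩ for all X ∈ M_{d₂}(ℂ), where Γ · U(X) and Γ_T · X denote matrix products; (iii) ‖U(X)‖₂ ≤ ‖X‖₂ for all X ∈ M_{d₂}(ℂ). -/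

import Mathlib

open Matrix MeasureTheory Filter Topology Kronecker ComplexOrder

/-- Apply a real function to a matrix via the functional calculus for Hermitian
matrices (and return `0` on non-Hermitian input). -/
noncomputable def mfun {d : ℕ} (f : ℝ → ℝ) (A : Matrix (Fin d) (Fin d) ℂ) :
    Matrix (Fin d) (Fin d) ℂ :=
  if hA : A.IsHermitian then hA.cfc f else 0

/-- Square root of a Hermitian positive semidefinite matrix. -/
noncomputable def msqrt {d : ℕ} (A : Matrix (Fin d) (Fin d) ℂ) : Matrix (Fin d) (Fin d) ℂ :=
  mfun Real.sqrt A

/-- Inverse square root of a Hermitian positive semidefinite matrix (Moore–Penrose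
pseudoinverse of the square root in the singular case, since `(0 : ℝ)⁻¹ = 0`). -/
noncomputable def misqrt {d : ℕ} (A : Matrix (Fin d) (Fin d) ℂ) : Matrix (Fin d) (Fin d) ℂ :=
  mfun (fun x => (Real.sqrt x)⁻¹) A

/-- Inverse of a Hermitian matrix (Moore–Penrose pseudoinverse in the singular case). -/
noncomputable def minv {d : ℕ} (A : Matrix (Fin d) (Fin d) ℂ) : Matrix (Fin d) (Fin d) ℂ :=
  mfun (fun x => x⁻¹) A

/-- Logarithm of a positive definite matrix. -/
noncomputable def mlog {d : ℕ} (A : Matrix (Fin d) (Fin d) ℂ) : Matrix (Fin d) (Fin d) ℂ :=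
  mfun Real.log A

/-- Frobenius (Schatten-2) norm ‖A‖₂ = tr(AᴴA)^(1/2). -/
noncomputable def frob {n : Type*} [Fintype n] (A : Matrix n n ℂ) : ℝ :=
  Real.sqrt (Matrix.trace (Aᴴ * A)).re

/-- Operator norm ‖A‖∞ of a matrix, acting on the Euclidean space ℂᵈ. -/
noncomputable def opNorm {n : Type*} [Fintype n] [DecidableEq n] (A : Matrix n n ℂ) : ℝ :=
  ‖LinearMap.toContinuousLinearMap (Matrix.toEuclideanLin A)‖

/-- The Belavkin–Staszewski relative entropy
`Ŝ_BS(σ‖ρ) = −tr[σ log(σ^{−1/2} ρ σ^{−1/2})]`. -/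
noncomputable def BS {d : ℕ} (σ ρ : Matrix (Fin d) (Fin d) ℂ) : ℝ :=
  -(Matrix.trace (σ * mlog (misqrt σ * ρ * misqrt σ))).re

/-- The maximal f-divergence `Ŝ_f(σ‖ρ) = tr[ρ^{1/2} f(ρ^{−1/2} σ ρ^{−1/2}) ρ^{1/2}]`. -/
noncomputable def hatS {d : ℕ} (f : ℝ → ℝ) (σ ρ : Matrix (Fin d) (Fin d) ℂ) : ℝ :=
  (Matrix.trace (msqrt ρ * mfun f (misqrt ρ * σ * misqrt ρ) * msqrt ρ)).re

/-- The Umegaki relative entropy `D(σ‖ρ) = tr[σ (log σ − log ρ)]`. -/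
noncomputable def relEnt {d : ℕ} (σ ρ : Matrix (Fin d) (Fin d) ℂ) : ℝ :=
  (Matrix.trace (σ * (mlog σ - mlog ρ))).re

/-- The Choi matrix of a linear map between matrix algebras. -/
noncomputable def choi {d₁ d₂ : ℕ} (T : Matrix (Fin d₁) (Fin d₁) ℂ →ₗ[ℂ] Matrix (Fin d₂) (Fin d₂) ℂ) :
    Matrix (Fin d₁ × Fin d₂) (Fin d₁ × Fin d₂) ℂ :=
  Matrix.of fun p q => T (Matrix.single p.1 q.1 1) p.2 q.2

/-- A quantum channel: a completely positive (equivalently, with positive semidefinite Choi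
matrix) trace-preserving linear map. -/
def IsCPTP {d₁ d₂ : ℕ} (T : Matrix (Fin d₁) (Fin d₁) ℂ →ₗ[ℂ] Matrix (Fin d₂) (Fin d₂) ℂ) :
    Prop :=
  (choi T).PosSemidef ∧ ∀ A, (T A).trace = A.trace

/-- Partial trace over the second tensor factor. -/
noncomputable def ptrace2 {d₂ s : ℕ} (M : Matrix (Fin d₂ × Fin s) (Fin d₂ × Fin s) ℂ) :
    Matrix (Fin d₂) (Fin d₂) ℂ :=
  Matrix.of fun i j => ∑ k : Fin s, M (i, k) (j, k)

/-- The Loewner order: `A ≤ B` iff `B - A` is positive semidefinite. -/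
def Loewner {n : ℕ} (A B : Matrix (Fin n) (Fin n) ℂ) : Prop := (B - A).PosSemidef

/-- A function `f : (0,∞) → ℝ` is operator convex. -/
def OperatorConvex (f : ℝ → ℝ) : Prop :=
  ∀ (n : ℕ) (A B : Matrix (Fin n) (Fin n) ℂ), A.PosDef → B.PosDef →
    ∀ t : ℝ, 0 ≤ t → t ≤ 1 →
      Loewner (mfun f ((t : ℂ) • A + ((1 - t : ℝ) : ℂ) • B))
        ((t : ℂ) • mfun f A + ((1 - t : ℝ) : ℂ) • mfun f B)

/-- A function `f : (0,∞) → ℝ` is operator monotone decreasing. -/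
def OperatorAntitone (f : ℝ → ℝ) : Prop :=
  ∀ (n : ℕ) (A B : Matrix (Fin n) (Fin n) ℂ), A.PosDef → B.PosDef →
    Loewner A B → Loewner (mfun f B) (mfun f A)

/-! By Choi's theorem the channel has Kraus operators `Kᵢ` with `∑ Kᵢᴴ Kᵢ = 1`, so its adjoint
`T* X = ∑ Kᵢᴴ X Kᵢ` is unital and completely positive and satisfies the Kadison–Schwarz inequality
`T*(Z Zᴴ) ≥ T*(Z) T*(Z)ᴴ`. Pairing it with a positive `ω` gives
`⟨T* Z, ω · T* Z⟩ ≤ ⟨Z, T(ω) · Z⟩`. For `Z = σ_T^{-1/2} X` the factors `σ^{±1/2}` cancel: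
`ω = ρ` gives (ii), and `ω = σ` gives (iii) because `σ_T^{-1/2} σ_T σ_T^{-1/2} = 1`. -/

namespace Matrix

section Functional

variable {d : ℕ} {A : Matrix (Fin d) (Fin d) ℂ}

lemma mfun_eq_cfc (f : ℝ → ℝ) (A : Matrix (Fin d) (Fin d) ℂ) : mfun f A = cfc f A := by
  unfold mfun
  split_ifs with hA
  · exact (hA.cfc_eq f).symm
  · exact (cfc_apply_of_not_predicate A hA).symm

lemma isHermitian_mfun (f : ℝ → ℝ) (A : Matrix (Fin d) (Fin d) ℂ) : (mfun f A).IsHermitian :=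
  mfun_eq_cfc f A ▸ cfc_predicate f A

lemma PosDef.mfun_mul_mfun (hA : A.PosDef) {f g h : ℝ → ℝ}
    (hfg : ∀ x, 0 < x → f x * g x = h x) : mfun f A * mfun g A = mfun h A := by
  have hcont : ∀ k : ℝ → ℝ, ContinuousOn k (spectrum ℝ A) :=
    fun k => A.finite_real_spectrum.continuousOn k
  rw [mfun_eq_cfc, mfun_eq_cfc, mfun_eq_cfc, ← cfc_mul f g A (hcont f) (hcont g)]
  refine cfc_congr fun x hx => hfg x ?_
  obtain ⟨i, rfl⟩ := hA.1.spectrum_real_eq_range_eigenvalues ▸ hx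
  exact hA.eigenvalues_pos i

lemma PosDef.misqrt_mul_msqrt (hA : A.PosDef) : misqrt A * msqrt A = 1 := by
  rw [misqrt, msqrt, hA.mfun_mul_mfun (h := fun _ => 1), mfun_eq_cfc,
    cfc_const_one ℝ A hA.1.isSelfAdjoint]
  intro x hx
  exact inv_mul_cancel₀ (Real.sqrt_pos.mpr hx).ne'

lemma PosDef.msqrt_mul_misqrt (hA : A.PosDef) : msqrt A * misqrt A = 1 := by
  rw [misqrt, msqrt, hA.mfun_mul_mfun (h := fun _ => 1), mfun_eq_cfc,
    cfc_const_one ℝ A hA.1.isSelfAdjoint]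
  intro x hx
  exact mul_inv_cancel₀ (Real.sqrt_pos.mpr hx).ne'

lemma PosDef.msqrt_mul_msqrt (hA : A.PosDef) : msqrt A * msqrt A = A := by
  rw [msqrt, hA.mfun_mul_mfun (h := fun x => x), mfun_eq_cfc, cfc_id' ℝ A hA.1.isSelfAdjoint]
  intro x hx
  exact Real.mul_self_sqrt hx.le

lemma PosDef.misqrt_mul_mul_misqrt (hA : A.PosDef) : misqrt A * A * misqrt A = 1 := by
  calc misqrt A * A * misqrt A = misqrt A * (msqrt A * msqrt A) * misqrt A := by
        rw [hA.msqrt_mul_msqrt]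
    _ = misqrt A * msqrt A * (msqrt A * misqrt A) := by simp only [mul_assoc]
    _ = 1 := by rw [hA.misqrt_mul_msqrt, hA.msqrt_mul_misqrt, one_mul]

end Functional

section Kraus

variable {ι m n : Type*} [Fintype ι] [Fintype m] [Fintype n]

lemma PosSemidef.trace_mul_nonneg [DecidableEq n] {A B : Matrix n n ℂ} (hA : A.PosSemidef)
    (hB : B.PosSemidef) : 0 ≤ (A * B).trace := by
  open scoped MatrixOrder Matrix.Norms.L2Operator in
  obtain ⟨C, rfl⟩ := CStarAlgebra.nonneg_iff_eq_star_mul_self.mp hB.nonneg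
  rw [star_eq_conjTranspose, ← mul_assoc, trace_mul_comm, ← mul_assoc]
  exact (hA.mul_mul_conjTranspose_same C).trace_nonneg

lemma trace_conjTranspose_mul_comm (A B : Matrix m n ℂ) :
    (Aᴴ * B).trace = star (Bᴴ * A).trace := by
  rw [← trace_conjTranspose, conjTranspose_mul, conjTranspose_conjTranspose]

lemma trace_conjTranspose_mul_symm {T : Matrix m m ℂ → Matrix n n ℂ}
    {Φ : Matrix n n ℂ → Matrix m m ℂ} (h : ∀ X Y, ((T Y)ᴴ * X).trace = (Yᴴ * Φ X).trace)
    (X : Matrix n n ℂ) (Y : Matrix m m ℂ) : ((Φ X)ᴴ * Y).trace = (Xᴴ * T Y).trace := by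
  rw [trace_conjTranspose_mul_comm, ← h, ← trace_conjTranspose_mul_comm]

lemma conjTranspose_mul_mul_mul_self {l : Type*} {C : Matrix m m ℂ} (hC : C.IsHermitian)
    (M : Matrix m m ℂ) (X : Matrix m l ℂ) :
    (C * X)ᴴ * (M * (C * X)) = Xᴴ * (C * M * C * X) := by
  simp only [conjTranspose_mul, hC.eq, Matrix.mul_assoc]

lemma sum_conjTranspose_mul_self_eq_one [DecidableEq n] {K : ι → Matrix m n ℂ}
    (h : ∀ A : Matrix n n ℂ, (∑ i, K i * A * (K i)ᴴ).trace = A.trace) : ∑ i, (K i)ᴴ * K i = 1 := by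
  rw [ext_iff_trace_mul_right]
  intro A
  rw [one_mul, ← h A, Finset.sum_mul, trace_sum, trace_sum]
  refine Finset.sum_congr rfl fun i _ => ?_
  exact (trace_mul_cycle _ _ _).symm

lemma eq_sum_conjTranspose_mul_mul_of_adjoint {K : ι → Matrix m n ℂ}
    {Φ : Matrix m m ℂ → Matrix n n ℂ}
    (h : ∀ X Y, ((∑ i, K i * Y * (K i)ᴴ)ᴴ * X).trace = (Yᴴ * Φ X).trace) (X : Matrix m m ℂ) :
    Φ X = ∑ i, (K i)ᴴ * X * K i := by
  rw [ext_iff_trace_mul_left]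
  intro Y
  rw [← conjTranspose_conjTranspose Y, ← h, conjTranspose_sum, Finset.sum_mul, trace_sum,
    Finset.mul_sum, trace_sum]
  refine Finset.sum_congr rfl fun i _ => ?_
  simp only [conjTranspose_mul, conjTranspose_conjTranspose, Matrix.mul_assoc]
  rw [trace_mul_comm (K i)]
  simp only [Matrix.mul_assoc]

lemma kadison_schwarz {K : ι → Matrix m n ℂ} [DecidableEq n] (hK : ∑ i, (K i)ᴴ * K i = 1)
    (Z : Matrix m m ℂ) :
    (∑ i, (K i)ᴴ * (Z * Zᴴ) * K i -
      (∑ i, (K i)ᴴ * Z * K i) * (∑ i, (K i)ᴴ * Z * K i)ᴴ).PosSemidef := by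
  set P := ∑ i, (K i)ᴴ * Z * K i
  have hPH : Pᴴ = ∑ i, (K i)ᴴ * Zᴴ * K i := by
    simp only [P, conjTranspose_sum, conjTranspose_mul, conjTranspose_conjTranspose,
      Matrix.mul_assoc]
  have hgram : ∑ i, (K i)ᴴ * (Z * Zᴴ) * K i - P * Pᴴ =
      ∑ i, (Zᴴ * K i - K i * Pᴴ)ᴴ * (Zᴴ * K i - K i * Pᴴ) := by
    have hterm : ∀ i, (Zᴴ * K i - K i * Pᴴ)ᴴ * (Zᴴ * K i - K i * Pᴴ) =
        (K i)ᴴ * (Z * Zᴴ) * K i - (K i)ᴴ * Z * K i * Pᴴ - P * ((K i)ᴴ * Zᴴ * K i) +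
          P * ((K i)ᴴ * K i) * Pᴴ := by
      intro i
      simp only [conjTranspose_sub, conjTranspose_mul, conjTranspose_conjTranspose,
        Matrix.sub_mul, Matrix.mul_sub, Matrix.mul_assoc]
      abel
    rw [Finset.sum_congr rfl fun i _ => hterm i, Finset.sum_add_distrib, Finset.sum_sub_distrib,
      Finset.sum_sub_distrib, ← Finset.sum_mul, ← Finset.mul_sum, ← Finset.sum_mul,
      ← Finset.mul_sum, hK, ← hPH, mul_one]
    abel
  rw [hgram]
  exact posSemidef_sum _ fun i _ => posSemidef_conjTranspose_mul_self _

theorem trace_conjTranspose_mul_mul_le [DecidableEq n] {K : ι → Matrix m n ℂ}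
    (hK : ∑ i, (K i)ᴴ * K i = 1) {ρ : Matrix n n ℂ} (hρ : ρ.PosSemidef) (Z : Matrix m m ℂ) :
    ((∑ i, (K i)ᴴ * Z * K i)ᴴ * (ρ * ∑ i, (K i)ᴴ * Z * K i)).trace ≤
      (Zᴴ * ((∑ i, K i * ρ * (K i)ᴴ) * Z)).trace := by
  set P := ∑ i, (K i)ᴴ * Z * K i
  have hL : (Pᴴ * (ρ * P)).trace = (ρ * (P * Pᴴ)).trace := by
    rw [trace_mul_comm, Matrix.mul_assoc]
  have hR : (Zᴴ * ((∑ i, K i * ρ * (K i)ᴴ) * Z)).trace =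
      (ρ * ∑ i, (K i)ᴴ * (Z * Zᴴ) * K i).trace := by
    rw [Finset.sum_mul, Finset.mul_sum, Finset.mul_sum, trace_sum, trace_sum]
    refine Finset.sum_congr rfl fun i _ => ?_
    rw [trace_mul_comm Zᴴ]
    simp only [Matrix.mul_assoc]
    rw [trace_mul_comm (K i)]
    simp only [Matrix.mul_assoc]
  rw [hL, hR, ← sub_nonneg, ← trace_sub, ← Matrix.mul_sub]
  exact hρ.trace_mul_nonneg (kadison_schwarz hK Z)

end Kraus

end Matrix

theorem exists_kraus_of_posSemidef_choi {d₁ d₂ : ℕ}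
    {T : Matrix (Fin d₁) (Fin d₁) ℂ →ₗ[ℂ] Matrix (Fin d₂) (Fin d₂) ℂ} (hT : (choi T).PosSemidef) :
    ∃ K : Fin d₁ × Fin d₂ → Matrix (Fin d₂) (Fin d₁) ℂ, ∀ A, T A = ∑ i, K i * A * (K i)ᴴ := by
  open scoped MatrixOrder Matrix.Norms.L2Operator in
  obtain ⟨B, hB⟩ := CStarAlgebra.nonneg_iff_eq_star_mul_self.mp hT.nonneg
  refine ⟨fun i => of fun a p => star (B i (p, a)), fun A => ?_⟩
  have hA : T A = ∑ p, ∑ q, A p q • T (single p q 1) := by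
    conv_lhs => rw [matrix_eq_sum_single A]
    simp only [map_sum, ← LinearMap.map_smul, smul_single, smul_eq_mul, mul_one]
  have hc : ∀ p q a b, T (single p q 1) a b = ∑ i, star (B i (p, a)) * B i (q, b) :=
    fun p q a b => by simpa [choi, Matrix.mul_apply] using congrFun (congrFun hB (p, a)) (q, b)
  ext a b
  simp only [hA, Matrix.sum_apply, Matrix.smul_apply, hc, mul_apply, of_apply,
    conjTranspose_apply, star_star, smul_eq_mul, Finset.mul_sum, Finset.sum_mul]
  rw [Finset.sum_congr rfl fun p _ => Finset.sum_comm, Finset.sum_comm]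
  refine Finset.sum_congr rfl fun i _ => ?_
  rw [Finset.sum_comm]
  exact Finset.sum_congr rfl fun q _ => Finset.sum_congr rfl fun p _ => by ring

theorem stmt2_general {d₁ d₂ : ℕ}
    (T : Matrix (Fin d₁) (Fin d₁) ℂ →ₗ[ℂ] Matrix (Fin d₂) (Fin d₂) ℂ)
    (hT : IsCPTP T)
    (Tadj : Matrix (Fin d₂) (Fin d₂) ℂ → Matrix (Fin d₁) (Fin d₁) ℂ)
    (hTadj : ∀ (X : Matrix (Fin d₂) (Fin d₂) ℂ) (Y : Matrix (Fin d₁) (Fin d₁) ℂ),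
      Matrix.trace ((T Y)ᴴ * X) = Matrix.trace (Yᴴ * Tadj X))
    (σ ρ : Matrix (Fin d₁) (Fin d₁) ℂ)
    (hσ : σ.PosDef)
    (hρ : ρ.PosDef)
    (hσT : (T σ).PosDef) :
    let U : Matrix (Fin d₂) (Fin d₂) ℂ → Matrix (Fin d₁) (Fin d₁) ℂ :=
      fun X => msqrt σ * Tadj (misqrt (T σ) * X)
    (∀ (X : Matrix (Fin d₂) (Fin d₂) ℂ) (Y : Matrix (Fin d₁) (Fin d₁) ℂ),
        Matrix.trace ((U X)ᴴ * Y) = Matrix.trace (Xᴴ * (misqrt (T σ) * T (msqrt σ * Y)))) ∧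
    (∀ X : Matrix (Fin d₂) (Fin d₂) ℂ,
        (Matrix.trace ((U X)ᴴ * ((misqrt σ * ρ * misqrt σ) * U X))).re ≤
          (Matrix.trace (Xᴴ * ((misqrt (T σ) * T ρ * misqrt (T σ)) * X))).re) ∧
    (∀ X : Matrix (Fin d₂) (Fin d₂) ℂ, frob (U X) ≤ frob X) := by
  intro U
  obtain ⟨K, hTK⟩ := exists_kraus_of_posSemidef_choi hT.1
  have hK : ∑ i, (K i)ᴴ * K i = 1 :=
    sum_conjTranspose_mul_self_eq_one fun A => by rw [← hTK, hT.2]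
  have hTadjK : ∀ X, Tadj X = ∑ i, (K i)ᴴ * X * K i :=
    eq_sum_conjTranspose_mul_mul_of_adjoint fun X Y => by rw [← hTK, hTadj]
  have hdual_le : ∀ {ω}, ω.PosSemidef → ∀ Z,
      ((Tadj Z)ᴴ * (ω * Tadj Z)).trace ≤ (Zᴴ * (T ω * Z)).trace := fun hω Z => by
    simpa only [hTadjK, hTK] using trace_conjTranspose_mul_mul_le hK hω Z
  have hS : (msqrt σ).IsHermitian := isHermitian_mfun _ _
  have hTi : (misqrt (T σ)).IsHermitian := isHermitian_mfun _ _
  refine ⟨fun X Y => ?_, fun X => ?_, fun X => ?_⟩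
  · rw [conjTranspose_mul, hS.eq, Matrix.mul_assoc, trace_conjTranspose_mul_symm hTadj,
      conjTranspose_mul, hTi.eq, Matrix.mul_assoc]
  · have hρσ : msqrt σ * (misqrt σ * ρ * misqrt σ) * msqrt σ = ρ := by
      simp only [← Matrix.mul_assoc, hσ.msqrt_mul_misqrt, Matrix.one_mul]
      rw [Matrix.mul_assoc, hσ.misqrt_mul_msqrt, Matrix.mul_one]
    rw [conjTranspose_mul_mul_mul_self hS, hρσ, ← conjTranspose_mul_mul_mul_self hTi]
    exact Complex.re_le_re (hdual_le hρ.posSemidef _)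
  · set W := Tadj (misqrt (T σ) * X)
    have hL : (U X)ᴴ * U X = Wᴴ * (σ * W) :=
      calc (U X)ᴴ * U X = (U X)ᴴ * (1 * U X) := by rw [Matrix.one_mul]
        _ = Wᴴ * (msqrt σ * 1 * msqrt σ * W) := conjTranspose_mul_mul_mul_self hS 1 W
        _ = Wᴴ * (σ * W) := by rw [Matrix.mul_one, hσ.msqrt_mul_msqrt]
    have hR : Xᴴ * X = (misqrt (T σ) * X)ᴴ * (T σ * (misqrt (T σ) * X)) := by
      rw [conjTranspose_mul_mul_mul_self hTi, hσT.misqrt_mul_mul_misqrt, Matrix.one_mul]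
    rw [frob, frob, hL, hR]
    exact Real.sqrt_le_sqrt (Complex.re_le_re (hdual_le hσ.posSemidef _))

theorem stmt2 {d₁ d₂ : ℕ}
    (T : Matrix (Fin d₁) (Fin d₁) ℂ →ₗ[ℂ] Matrix (Fin d₂) (Fin d₂) ℂ)
    (hT : IsCPTP T)
    (Tadj : Matrix (Fin d₂) (Fin d₂) ℂ → Matrix (Fin d₁) (Fin d₁) ℂ)
    (hTadj : ∀ (X : Matrix (Fin d₂) (Fin d₂) ℂ) (Y : Matrix (Fin d₁) (Fin d₁) ℂ),
      Matrix.trace ((T Y)ᴴ * X) = Matrix.trace (Yᴴ * Tadj X))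
    (σ ρ : Matrix (Fin d₁) (Fin d₁) ℂ)
    (hσ : σ.PosDef) (hσtr : σ.trace = 1)
    (hρ : ρ.PosDef) (hρtr : ρ.trace = 1)
    (hσT : (T σ).PosDef) (hρT : (T ρ).PosDef) :
    let U : Matrix (Fin d₂) (Fin d₂) ℂ → Matrix (Fin d₁) (Fin d₁) ℂ :=
      fun X => msqrt σ * Tadj (misqrt (T σ) * X)
    (∀ (X : Matrix (Fin d₂) (Fin d₂) ℂ) (Y : Matrix (Fin d₁) (Fin d₁) ℂ),
        Matrix.trace ((U X)ᴴ * Y) = Matrix.trace (Xᴴ * (misqrt (T σ) * T (msqrt σ * Y)))) ∧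
    (∀ X : Matrix (Fin d₂) (Fin d₂) ℂ,
        (Matrix.trace ((U X)ᴴ * ((misqrt σ * ρ * misqrt σ) * U X))).re ≤
          (Matrix.trace (Xᴴ * ((misqrt (T σ) * T ρ * misqrt (T σ)) * X))).re) ∧
    (∀ X : Matrix (Fin d₂) (Fin d₂) ℂ, frob (U X) ≤ frob X) :=
  stmt2_general T hT Tadj hTadj σ ρ hσ hρ hσT
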